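/- Polynomial functors between slices of a locally cartesian closed category are closed under coproducts: given a family of polynomials I ← A_k → B_k → J (k ∈ K, K a set), the coproduct of the induced polynomial functors is naturally isomorphic to the functor induced by the polynomial I ← ∐_k A_k → ∐_k B_k → J. -/

import Mathlib

open CategoryTheory

/-- The polynomial functor `Set/I ⥤ Set/J` (in indexed-family form) induced by a
polynomial `I ←s– A –f→ B –t→ J`. -/
@[simps]
def polyFunctor {I J A B : Type} (s : A → I) (f : A → B) (t : B → J) :
    (∀ _ : I, Type) ⥤ (∀ _ : J, Type) where
  obj X j := Σ b : { b : B // t b = j }, ∀ a : { a : A // f a = b.1 }, X (s a.1)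
  map {X Y} η j := TypeCat.ofHom (fun x => ⟨x.1, fun a => η (s a.1) (x.2 a)⟩)

/-- The pointwise coproduct of a `K`-indexed family of functors
`Set/I ⥤ Set/J`. -/
@[simps]
def coprodFunctor {I J K : Type} (F : K → ((∀ _ : I, Type) ⥤ (∀ _ : J, Type))) :
    (∀ _ : I, Type) ⥤ (∀ _ : J, Type) where
  obj X j := Σ k : K, (F k).obj X j
  map {X Y} η j := TypeCat.ofHom (fun x => ⟨x.1, (F x.1).map η j x.2⟩)

/-! The fibre of `Sigma.map id f` over `⟨k, b⟩` is the fibre of `f k` over `b`, because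
coproducts are disjoint (`Sigma.mk` is injective). Hence the dependent product over a fibre of
the coproduct polynomial is the one over a fibre of its `k`-th component, while the dependent
sum over `{b : Σ k, B k // t b.1 b.2 = j}` splits as a sum over `k`. -/

section

variable {K : Type*} {A B : K → Type*}

noncomputable def sigmaMapFiberEquiv (f : ∀ k, A k → B k) (k : K) (b : B k) :
    {a : A k // f k a = b} ≃ {a : Σ k, A k // Sigma.map id f a = ⟨k, b⟩} :=
  Equiv.ofBijective (fun a => ⟨⟨k, a.1⟩, congrArg (Sigma.mk k) a.2⟩) <| by
    refine ⟨fun a a' h => Subtype.ext (eq_of_heq (Sigma.mk.inj (congrArg Subtype.val h)).2), ?_⟩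
    rintro ⟨⟨k', a⟩, h⟩
    obtain ⟨rfl, h⟩ := Sigma.mk.inj h
    exact ⟨⟨a, eq_of_heq h⟩, rfl⟩

end

section

variable {I J K : Type} {A B : K → Type}
  (s : ∀ k, A k → I) (f : ∀ k, A k → B k) (t : ∀ k, B k → J)

noncomputable def sigmaMapFiberPiEquiv (X : I → Type) (k : K) (b : B k) :
    (∀ a : {a : Σ k, A k // Sigma.map id f a = ⟨k, b⟩}, X (s a.1.1 a.1.2)) ≃
      ∀ a : {a : A k // f k a = b}, X (s k a.1) :=
  (Equiv.piCongrLeft (fun a : {a : Σ k, A k // Sigma.map id f a = ⟨k, b⟩} => X (s a.1.1 a.1.2))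
    (sigmaMapFiberEquiv f k b)).symm

noncomputable def polyFunctorSigmaObjEquiv (X : I → Type) (j : J) :
    (polyFunctor (fun a : Σ k, A k => s a.1 a.2) (Sigma.map id f) (fun b => t b.1 b.2)).obj X j ≃
      (coprodFunctor fun k => polyFunctor (s k) (f k) (t k)).obj X j where
  toFun x := ⟨x.1.1.1, ⟨x.1.1.2, x.1.2⟩, sigmaMapFiberPiEquiv s f X _ _ x.2⟩
  invFun y := ⟨⟨⟨y.1, y.2.1.1⟩, y.2.1.2⟩, (sigmaMapFiberPiEquiv s f X _ _).symm y.2.2⟩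
  left_inv x := congrArg (Sigma.mk x.1) ((sigmaMapFiberPiEquiv s f X _ _).symm_apply_apply x.2)
  right_inv y :=
    congrArg (fun u => (⟨y.1, y.2.1, u⟩ : Σ k, (polyFunctor (s k) (f k) (t k)).obj X j))
      ((sigmaMapFiberPiEquiv s f X _ _).apply_symm_apply y.2.2)

noncomputable def polyFunctorSigmaIso :
    polyFunctor (fun a : Σ k, A k => s a.1 a.2) (Sigma.map id f) (fun b => t b.1 b.2) ≅
      coprodFunctor fun k => polyFunctor (s k) (f k) (t k) :=
  NatIso.ofComponents (fun X => Pi.isoMk fun j => (polyFunctorSigmaObjEquiv s f t X j).toIso)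
    fun _ => rfl

end

/-- polynomial functors are closed under coproducts: given a set
`K` and polynomials `I ← A_k → B_k → J`, the functor induced by the coproduct
polynomial `I ← ∐_k A_k → ∐_k B_k → J` is naturally isomorphic to the pointwise
coproduct of the induced polynomial functors. -/
theorem polyFunctor_coprod {I J K : Type} {A B : K → Type}
    (s : ∀ k, A k → I) (f : ∀ k, A k → B k) (t : ∀ k, B k → J) :
    Nonempty
      (polyFunctor (fun a : Σ k, A k => s a.1 a.2)
          (fun a : Σ k, A k => (⟨a.1, f a.1 a.2⟩ : Σ k, B k))
          (fun b : Σ k, B k => t b.1 b.2) ≅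
        coprodFunctor (fun k => polyFunctor (s k) (f k) (t k))) :=
  ⟨polyFunctorSigmaIso s f t⟩
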